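/- arXiv:1509.04721 — 7 statements merged into one kernel-verified Lean document; each statement's English description precedes it below -/
import Mathlib

section
/- For every L > 0, the smallest positive root Ω of the equation 2 sin(ωπ) sin(ωL) = cos(ωπ) cos(ωL) satisfies Ω < 1/2. -/
/-!
The left-hand side minus the right-hand side is `-1` at `ω = 0`. At the smaller of `1/2` and
`π / (2L)` one of the two phases `ωπ`, `ωL` equals `π/2` and the other lies in `(0, π)`, so there
the difference is `2 sin` of the other phase, which is positive. The intermediate value theorem
then yields a root strictly below that point, hence below `1/2`.
-/

open Real

noncomputable def oddDispersion (L ω : ℝ) : ℝ :=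
  2 * sin (ω * π) * sin (ω * L) - cos (ω * π) * cos (ω * L)

lemma continuous_oddDispersion (L : ℝ) : Continuous (oddDispersion L) := by
  unfold oddDispersion
  fun_prop

lemma oddDispersion_zero (L : ℝ) : oddDispersion L 0 = -1 := by
  simp [oddDispersion]

lemma oddDispersion_eq_zero_iff {L ω : ℝ} :
    oddDispersion L ω = 0 ↔ 2 * sin (ω * π) * sin (ω * L) = cos (ω * π) * cos (ω * L) :=
  sub_eq_zero

lemma oddDispersion_pos_of_le_pi {L : ℝ} (hL : 0 < L) (hLπ : L ≤ π) :
    0 < oddDispersion L (1 / 2) := by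
  have hsin : 0 < sin (L / 2) := sin_pos_of_pos_of_lt_pi (by linarith) (by linarith [pi_pos])
  rw [oddDispersion, one_div_mul_eq_div, one_div_mul_eq_div, sin_pi_div_two, cos_pi_div_two]
  linarith

lemma oddDispersion_pos_of_pi_lt {L : ℝ} (hπL : π < L) :
    0 < oddDispersion L (π / (2 * L)) := by
  have hL : 0 < L := pi_pos.trans hπL
  have hphase : π / (2 * L) * L = π / 2 := by field_simp
  have hsin : 0 < sin (π / (2 * L) * π) := by
    apply sin_pos_of_pos_of_lt_pi (by positivity)
    rw [div_mul_eq_mul_div, div_lt_iff₀ (by positivity)]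
    nlinarith [pi_pos]
  rw [oddDispersion, hphase, sin_pi_div_two, cos_pi_div_two]
  linarith

lemma exists_oddDispersion_pos {L : ℝ} (hL : 0 < L) :
    ∃ b, 0 < b ∧ b ≤ 1 / 2 ∧ 0 < oddDispersion L b := by
  rcases le_or_gt L π with hLπ | hπL
  · exact ⟨1 / 2, by norm_num, le_rfl, oddDispersion_pos_of_le_pi hL hLπ⟩
  · refine ⟨π / (2 * L), by positivity, ?_, oddDispersion_pos_of_pi_lt hπL⟩
    rw [div_le_div_iff₀ (by positivity) (by norm_num)]
    linarith

lemma exists_oddDispersion_eq_zero_lt_half {L : ℝ} (hL : 0 < L) :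
    ∃ c, 0 < c ∧ c < 1 / 2 ∧ oddDispersion L c = 0 := by
  obtain ⟨b, hb, hb_le, hfb⟩ := exists_oddDispersion_pos hL
  have hsign : (0 : ℝ) ∈ Set.Ioo (oddDispersion L 0) (oddDispersion L b) :=
    ⟨by rw [oddDispersion_zero]; norm_num, hfb⟩
  obtain ⟨c, ⟨hc, hcb⟩, hfc⟩ :=
    intermediate_value_Ioo hb.le (continuous_oddDispersion L).continuousOn hsign
  exact ⟨c, hc, hcb.trans_le hb_le, hfc⟩

theorem smallest_root_lt_half (L : ℝ) (hL : 0 < L) (Ω : ℝ)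
    (hΩ : IsLeast {ω : ℝ | 0 < ω ∧
      2 * Real.sin (ω * π) * Real.sin (ω * L) = Real.cos (ω * π) * Real.cos (ω * L)} Ω) :
    Ω < 1 / 2 := by
  obtain ⟨c, hc, hc_lt, hfc⟩ := exists_oddDispersion_eq_zero_lt_half hL
  exact (hΩ.2 ⟨hc, oddDispersion_eq_zero_iff.mp hfc⟩).trans_lt hc_lt
end

section
/- For every L > 0, the smallest positive root Ω of the equation 2 sin(ωπ) sin(ωL) = cos(ωπ) cos(ωL) satisfies Ω < π/(2L). -/
/-!
Let `f ω = cos (ω a) cos (ω b) - c sin (ω a) sin (ω b)`, so `f 0 = 1`. If `a ≤ b`, then at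
`ω = π / (2b)` the factor `cos (ω b)` vanishes while `sin (ω a)` and `sin (ω b)` are positive,
so `f` is negative there and has a zero in between by the intermediate value theorem. If
`b < a`, the zero found for the pair `(b, a)` lies below `π / (2a) < π / (2b)`.
-/

open Real Set

lemma exists_root_lt_pi_div_two_mul_of_le {a b c : ℝ} (ha : 0 < a) (hab : a ≤ b) (hc : 0 < c) :
    ∃ ω ∈ Ioo 0 (π / (2 * b)),
      c * sin (ω * a) * sin (ω * b) = cos (ω * a) * cos (ω * b) := by
  set f : ℝ → ℝ := fun ω => cos (ω * a) * cos (ω * b) - c * sin (ω * a) * sin (ω * b)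
  have hb : 0 < b := ha.trans_le hab
  set t := π / (2 * b)
  have ht : 0 < t := by positivity
  have htb : t * b = π / 2 := by simp only [t]; field_simp
  have hsin : 0 < sin (t * a) := by
    refine sin_pos_of_pos_of_lt_pi (by positivity) ?_
    calc t * a ≤ t * b := by gcongr
      _ < π := by linarith [pi_pos]
  have hft : f t < 0 := by
    simp only [f, htb, cos_pi_div_two, sin_pi_div_two]
    linarith [mul_pos hc hsin]
  obtain ⟨ω, hω, hfω⟩ :=
    intermediate_value_Ioo' ht.le (by fun_prop : Continuous f).continuousOn
      (⟨hft, by simp [f]⟩ : (0 : ℝ) ∈ Ioo (f t) (f 0))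
  exact ⟨ω, hω, by linarith⟩

lemma exists_root_lt_pi_div_two_mul {a b c : ℝ} (ha : 0 < a) (hb : 0 < b) (hc : 0 < c) :
    ∃ ω ∈ Ioo 0 (π / (2 * b)),
      c * sin (ω * a) * sin (ω * b) = cos (ω * a) * cos (ω * b) := by
  rcases le_total a b with hab | hba
  · exact exists_root_lt_pi_div_two_mul_of_le ha hab hc
  obtain ⟨ω, ⟨hω₀, hωa⟩, hroot⟩ := exists_root_lt_pi_div_two_mul_of_le hb hba hc
  refine ⟨ω, ⟨hω₀, hωa.trans_le ?_⟩, by linarith⟩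
  gcongr

theorem smallest_root_lt_pi_div_two_L (L : ℝ) (hL : 0 < L) (Ω : ℝ)
    (hΩ : IsLeast {ω : ℝ | 0 < ω ∧
      2 * Real.sin (ω * π) * Real.sin (ω * L) = Real.cos (ω * π) * Real.cos (ω * L)} Ω) :
    Ω < π / (2 * L) := by
  obtain ⟨ω, ⟨hω₀, hωL⟩, hroot⟩ := exists_root_lt_pi_div_two_mul pi_pos hL two_pos
  exact (hΩ.2 ⟨hω₀, hroot⟩).trans_lt hωL
end

section
/- As L → 0⁺, the smallest positive root Ω₁(L) of the equation 2 sin(ωπ) sin(ωL) = cos(ωπ) cos(ωL) converges to 1/2. -/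
/-! The dispersion function `2 sin(ωπ) sin(ωL) - cos(ωπ) cos(ωL)` equals `-1` at `ω = 0` and
`2 sin(L/2) ≥ 0` at `ω = 1/2`, so by the intermediate value theorem `Ω₁(L) ≤ 1/2`. Conversely, at a
root `ω ≤ 1/2` the left side `2 sin(ωπ) sin(ωL)` is at most `2ωL ≤ L`, while Jordan's inequality gives
`cos(ωπ) = sin((1/2 - ω)π) ≥ 1 - 2ω` and `cos(ωL) ≥ 1/2`; hence `1/2 - L ≤ Ω₁(L)`. -/

open Real Filter Set

theorem exists_root_mem_Ioc_half {L : ℝ} (hL₀ : 0 ≤ L) (hL : L ≤ 2 * π) :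
    ∃ ω ∈ Ioc (0 : ℝ) (1 / 2),
      2 * sin (ω * π) * sin (ω * L) = cos (ω * π) * cos (ω * L) := by
  let f : ℝ → ℝ := fun ω => 2 * sin (ω * π) * sin (ω * L) - cos (ω * π) * cos (ω * L)
  have hf₀ : f 0 = -1 := by simp [f]
  have hf_half : f (1 / 2) = 2 * sin (L / 2) := by
    simp only [f, one_div_mul_eq_div, sin_pi_div_two, cos_pi_div_two]
    ring
  have hsin : 0 ≤ sin (L / 2) := sin_nonneg_of_nonneg_of_le_pi (by linarith) (by linarith)
  obtain ⟨ω, hω, hfω⟩ : ∃ ω ∈ Icc (0 : ℝ) (1 / 2), f ω = 0 :=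
    intermediate_value_Icc (by norm_num) (by fun_prop) ⟨by linarith, by linarith⟩
  have hω₀ : ω ≠ 0 := by
    rintro rfl
    norm_num [hf₀] at hfω
  exact ⟨ω, ⟨lt_of_le_of_ne hω.1 (Ne.symm hω₀), hω.2⟩, sub_eq_zero.mp hfω⟩

theorem half_sub_le_of_root {L ω : ℝ} (hL₀ : 0 ≤ L) (hL : L ≤ 1) (hω₀ : 0 ≤ ω)
    (hroot : 2 * sin (ω * π) * sin (ω * L) = cos (ω * π) * cos (ω * L)) :
    1 / 2 - L ≤ ω := by
  rcases lt_or_ge (1 / 2) ω with hω | hω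
  · linarith
  have hωL : ω * L ≤ 1 / 2 := by nlinarith
  have hcos_π : 1 - 2 * ω ≤ cos (ω * π) := by
    have := mul_le_sin (x := π / 2 - ω * π) (by nlinarith [pi_pos]) (by nlinarith [pi_pos])
    have hscale : 2 / π * (π / 2 - ω * π) = 1 - 2 * ω := by field_simp
    rwa [sin_pi_div_two_sub, hscale] at this
  have hcos_L : 1 / 2 ≤ cos (ω * L) := by
    nlinarith [one_sub_sq_div_two_le_cos (x := ω * L), mul_nonneg hω₀ hL₀]
  have hsin_L : 0 ≤ sin (ω * L) :=
    sin_nonneg_of_nonneg_of_le_pi (mul_nonneg hω₀ hL₀) (by linarith [pi_gt_three])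
  have hlhs : 2 * sin (ω * π) * sin (ω * L) ≤ L := by
    nlinarith [sin_le_one (ω * π), sin_le (mul_nonneg hω₀ hL₀)]
  nlinarith

theorem smallest_root_tendsto_half (Ω₁ : ℝ → ℝ)
    (hΩ : ∀ L : ℝ, 0 < L → IsLeast {ω : ℝ | 0 < ω ∧
      2 * Real.sin (ω * π) * Real.sin (ω * L) = Real.cos (ω * π) * Real.cos (ω * L)} (Ω₁ L)) :
    Filter.Tendsto Ω₁ (nhdsWithin 0 (Set.Ioi 0)) (nhds (1 / 2)) := by
  have hbounds : ∀ L ∈ Ioc (0 : ℝ) 1, 1 / 2 - L ≤ Ω₁ L ∧ Ω₁ L ≤ 1 / 2 := by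
    intro L ⟨hL₀, hL⟩
    obtain ⟨⟨hΩ₀, hroot⟩, hleast⟩ := hΩ L hL₀
    obtain ⟨ω, ⟨hω₀, hω⟩, hωroot⟩ :=
      exists_root_mem_Ioc_half hL₀.le (by linarith [pi_gt_three])
    exact ⟨half_sub_le_of_root hL₀.le hL hΩ₀.le hroot, (hleast ⟨hω₀, hωroot⟩).trans hω⟩
  have hlower : Tendsto (fun L : ℝ => 1 / 2 - L) (nhdsWithin 0 (Ioi 0)) (nhds (1 / 2)) := by
    simpa using (tendsto_const_nhds (x := (1 / 2 : ℝ))).sub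
      (tendsto_id.mono_left (nhdsWithin_le_nhds (a := 0) (s := Ioi (0 : ℝ))))
  have hnear : ∀ᶠ L in nhdsWithin (0 : ℝ) (Ioi 0), L ∈ Ioc (0 : ℝ) 1 := Ioc_mem_nhdsGT one_pos
  exact tendsto_of_tendsto_of_tendsto_of_le_of_le' hlower tendsto_const_nhds
    (hnear.mono fun L hL => (hbounds L hL).1) (hnear.mono fun L hL => (hbounds L hL).2)
end

section
/- As L → ∞, the smallest positive root Ω₁(L) of the equation 2 sin(ωπ) sin(ωL) = cos(ωπ) cos(ωL) satisfies 2L·Ω₁(L) → π. -/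
/-!
Put `x = ω L`. The dispersion function is `-1` at `ω = 0` and `2 sin (π² / 2L) > 0` at
`ω = π / 2L`, so `0 < Ω₁ L < π / 2L`, whence `Ω₁ L → 0` and `x ∈ (0, π/2)`. Along the roots,
`cos (Ω₁ π) cos x = 2 sin (Ω₁ π) sin x → 0` while `cos (Ω₁ π) → 1`, so `cos x → 0`; as
`x ∈ [0, π]`, `x = arccos (cos x) → arccos 0 = π / 2`.
-/

open Real Filter Topology Set

theorem exists_dispersion_root_lt {L : ℝ} (hL : π / 2 < L) :
    ∃ ω ∈ Ioo 0 (π / (2 * L)),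
      2 * sin (ω * π) * sin (ω * L) = cos (ω * π) * cos (ω * L) := by
  have hL₀ : 0 < L := pi_div_two_pos.trans hL
  set g : ℝ → ℝ := fun ω => 2 * sin (ω * π) * sin (ω * L) - cos (ω * π) * cos (ω * L)
  have hg_cont : ContinuousOn g (Icc 0 (π / (2 * L))) := by fun_prop
  have hg_zero : g 0 = -1 := by simp [g]
  have hg_end : 0 < g (π / (2 * L)) := by
    have hπL : π / (2 * L) * L = π / 2 := by field_simp
    have hpos : 0 < π / (2 * L) * π := by positivity
    have hlt : π / (2 * L) * π < π := by
      rw [div_mul_eq_mul_div, div_lt_iff₀ (by positivity)]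
      nlinarith [pi_pos]
    simpa [g, hπL] using sin_pos_of_pos_of_lt_pi hpos hlt
  obtain ⟨ω, hω, hgω⟩ := intermediate_value_Ioo (by positivity) hg_cont
    (show (0 : ℝ) ∈ Ioo (g 0) (g (π / (2 * L))) from ⟨by rw [hg_zero]; norm_num, hg_end⟩)
  exact ⟨ω, hω, sub_eq_zero.mp hgω⟩

section Asymptotics

variable {α : Type*} {l : Filter α}

theorem tendsto_cos_zero_of_mul_sin_mul_sin_eq {a b : α → ℝ} (k : ℝ)
    (ha : Tendsto a l (𝓝 0))
    (h : ∀ᶠ i in l, k * sin (a i) * sin (b i) = cos (a i) * cos (b i)) :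
    Tendsto (fun i => cos (b i)) l (𝓝 0) := by
  have hsin : Tendsto (fun i => k * sin (a i)) l (𝓝 0) := by
    simpa using ((continuous_sin.tendsto 0).comp ha).const_mul k
  have hprod : Tendsto (fun i => cos (a i) * cos (b i)) l (𝓝 0) :=
    (hsin.zero_mul_isBoundedUnder_le
      (isBoundedUnder_of ⟨1, fun i => by simpa using abs_sin_le_one (b i)⟩)).congr' h
  have hcos : Tendsto (fun i => cos (a i)) l (𝓝 1) := by
    simpa [Function.comp_def] using (continuous_cos.tendsto 0).comp ha
  refine (by simpa [Pi.div_def] using hprod.div hcos one_ne_zero :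
    Tendsto (fun i => cos (a i) * cos (b i) / cos (a i)) l (𝓝 0)).congr' ?_
  filter_upwards [hcos.eventually_ne one_ne_zero] with i hi
  exact mul_div_cancel_left₀ _ hi

theorem tendsto_pi_div_two_of_tendsto_cos_zero {x : α → ℝ} (hx : ∀ᶠ i in l, x i ∈ Icc 0 π)
    (hcos : Tendsto (fun i => cos (x i)) l (𝓝 0)) : Tendsto x l (𝓝 (π / 2)) := by
  refine (by simpa [Function.comp_def] using (continuous_arccos.tendsto 0).comp hcos :
    Tendsto (fun i => arccos (cos (x i))) l (𝓝 (π / 2))).congr' ?_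
  filter_upwards [hx] with i hi
  exact arccos_cos hi.1 hi.2

end Asymptotics

theorem smallest_root_asymptotic (Ω₁ : ℝ → ℝ)
    (hΩ : ∀ L : ℝ, 0 < L → IsLeast {ω : ℝ | 0 < ω ∧
      2 * Real.sin (ω * π) * Real.sin (ω * L) = Real.cos (ω * π) * Real.cos (ω * L)} (Ω₁ L)) :
    Filter.Tendsto (fun L => 2 * L * Ω₁ L) Filter.atTop (nhds π) := by
  have hL₀ : ∀ᶠ L in atTop, (0 : ℝ) < L := eventually_gt_atTop 0
  have hbounds : ∀ᶠ L in atTop, 0 < Ω₁ L ∧ Ω₁ L < π / (2 * L) := by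
    filter_upwards [eventually_gt_atTop (π / 2)] with L hL
    obtain ⟨ω, hω, hroot⟩ := exists_dispersion_root_lt hL
    have hleast := hΩ L (pi_div_two_pos.trans hL)
    exact ⟨hleast.1.1, (hleast.2 ⟨hω.1, hroot⟩).trans_lt hω.2⟩
  have hΩ_zero : Tendsto Ω₁ atTop (𝓝 0) :=
    tendsto_of_tendsto_of_tendsto_of_le_of_le' tendsto_const_nhds
      (tendsto_const_nhds.div_atTop (tendsto_id.const_mul_atTop two_pos))
      (hbounds.mono fun _ h => h.1.le) (hbounds.mono fun _ h => h.2.le)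
  have hcos : Tendsto (fun L => cos (Ω₁ L * L)) atTop (𝓝 0) :=
    tendsto_cos_zero_of_mul_sin_mul_sin_eq 2 (by simpa using hΩ_zero.mul_const π)
      (hL₀.mono fun L hL => (hΩ L hL).1.2)
  have hx : Tendsto (fun L => Ω₁ L * L) atTop (𝓝 (π / 2)) := by
    refine tendsto_pi_div_two_of_tendsto_cos_zero ?_ hcos
    filter_upwards [hbounds, hL₀] with L ⟨hpos, hlt⟩ hL
    have : Ω₁ L * L ≤ π / 2 := by
      rw [lt_div_iff₀ (by positivity)] at hlt
      linarith
    exact ⟨by positivity, by linarith [pi_pos]⟩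
  convert hx.const_mul 2 using 2 <;> ring
end

section
/- The function v(ξ) = −(1/2)·tanh(ξ)·sech(ξ)·(sinh(ξ)cosh(ξ) + ξ) satisfies the linear inhomogeneous ODE −v'' + v − 6 sech²(ξ) v = 2 sech(ξ) on the real line. -/
/-!
Write `v = w · q` with `w = tanh · sech = -sech'` and `q = -(sinh cosh + ξ)/2`. Differentiating
`sech'' = sech - 2 sech³` once more gives `w'' = (1 - 6 sech²) w`, i.e. `w` spans the kernel of
`L = -d² + 1 - 6 sech²` (the translation mode of the soliton). Hence
`L (w q) = -2 w' q' - w q''`, and with `w' = 2 sech³ - sech`, `q' = -cosh²`, `q'' = -2 cosh sinh`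
this is `2 sech`.
-/

open Real

namespace Real

theorem hasDerivAt_tanh (x : ℝ) : HasDerivAt tanh ((1 / cosh x) ^ 2) x := by
  rw [funext tanh_eq_sinh_div_cosh]
  refine ((hasDerivAt_sinh x).fun_div (hasDerivAt_cosh x) (cosh_pos x).ne').congr_deriv ?_
  field_simp
  linear_combination cosh_sq x

theorem hasDerivAt_sech (x : ℝ) :
    HasDerivAt (fun x => 1 / cosh x) (-(tanh x * (1 / cosh x))) x := by
  refine ((hasDerivAt_const x 1).fun_div (hasDerivAt_cosh x) (cosh_pos x).ne').congr_deriv ?_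
  rw [tanh_eq_sinh_div_cosh]
  field_simp
  ring

theorem tanh_sq_add_sech_sq (x : ℝ) : tanh x ^ 2 + (1 / cosh x) ^ 2 = 1 := by
  rw [tanh_eq_sinh_div_cosh]
  field_simp
  linear_combination -(cosh_sq x)

theorem hasDerivAt_tanh_mul_sech (x : ℝ) :
    HasDerivAt (fun x => tanh x * (1 / cosh x)) (2 * (1 / cosh x) ^ 3 - 1 / cosh x) x := by
  refine ((hasDerivAt_tanh x).mul (hasDerivAt_sech x)).congr_deriv ?_
  linear_combination -(1 / cosh x) * tanh_sq_add_sech_sq x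

theorem hasDerivAt_two_mul_sech_pow_three_sub_sech (x : ℝ) :
    HasDerivAt (fun x => 2 * (1 / cosh x) ^ 3 - 1 / cosh x)
      ((1 - 6 * (1 / cosh x) ^ 2) * (tanh x * (1 / cosh x))) x := by
  refine ((((hasDerivAt_sech x).fun_pow 3).const_mul 2).fun_sub
    (hasDerivAt_sech x)).congr_deriv ?_
  ring

theorem hasDerivAt_sinh_mul_cosh_add_id (x : ℝ) :
    HasDerivAt (fun x => sinh x * cosh x + x) (2 * cosh x ^ 2) x := by
  refine (((hasDerivAt_sinh x).mul (hasDerivAt_cosh x)).add (hasDerivAt_id x)).congr_deriv ?_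
  linear_combination -(cosh_sq x)

end Real

theorem deriv_deriv_mul {𝕜 : Type*} [NontriviallyNormedField 𝕜] {f g f' g' : 𝕜 → 𝕜}
    {f'' g'' x : 𝕜} (hf : ∀ y, HasDerivAt f (f' y) y) (hg : ∀ y, HasDerivAt g (g' y) y)
    (hf' : HasDerivAt f' f'' x) (hg' : HasDerivAt g' g'' x) :
    deriv (deriv fun y => f y * g y) x = f'' * g x + 2 * (f' x * g' x) + f x * g'' := by
  have h : deriv (fun y => f y * g y) = fun y => f' y * g y + f y * g' y :=
    funext fun y => ((hf y).mul (hg y)).deriv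
  rw [h, ((hf'.fun_mul (hg x)).fun_add ((hf x).fun_mul hg')).deriv]
  ring

theorem dn_derivative_equation :
    ∀ ξ : ℝ,
      -(deriv (deriv (fun ξ : ℝ =>
          -(1 / 2) * Real.tanh ξ * (1 / Real.cosh ξ) * (Real.sinh ξ * Real.cosh ξ + ξ))) ξ)
        + (-(1 / 2) * Real.tanh ξ * (1 / Real.cosh ξ) * (Real.sinh ξ * Real.cosh ξ + ξ))
        - 6 * (1 / Real.cosh ξ) ^ 2 *
          (-(1 / 2) * Real.tanh ξ * (1 / Real.cosh ξ) * (Real.sinh ξ * Real.cosh ξ + ξ))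
      = 2 * (1 / Real.cosh ξ) := by
  intro ξ
  have hv : (fun ξ : ℝ => -(1 / 2) * tanh ξ * (1 / cosh ξ) * (sinh ξ * cosh ξ + ξ)) =
      fun ξ => tanh ξ * (1 / cosh ξ) * (-(1 / 2) * (sinh ξ * cosh ξ + ξ)) := by
    funext ξ
    ring
  have hq' : HasDerivAt (fun x => -(1 / 2) * (2 * cosh x ^ 2))
      (-(1 / 2) * (4 * cosh ξ * sinh ξ)) ξ := by
    refine ((((hasDerivAt_cosh ξ).pow 2).const_mul 2).const_mul _).congr_deriv ?_
    ring
  rw [hv, deriv_deriv_mul hasDerivAt_tanh_mul_sech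
    (fun x => (hasDerivAt_sinh_mul_cosh_add_id x).const_mul _)
    (hasDerivAt_two_mul_sech_pow_three_sub_sech ξ) hq', tanh_eq_sinh_div_cosh]
  field_simp
  linear_combination -4 * cosh ξ ^ 3 * cosh_sq ξ
end

section
/- Suppose ω > 0 satisfies 2 tan(ωπ) + tan(ωL) = 0 with cos(ωπ) ≠ 0 and cos(ωL) ≠ 0. Then the function defined by u₀(x) = cos(ωx) on [−L,L] and u₊(x) = (cos(ωL)/cos(ωπ))·cos(ω(x−L−π)) on [L, L+2π] satisfies −u'' = ω²u on each edge, u₊(L) = u₊(L+2π) = u₀(L), and u₊'(L) − u₊'(L+2π) = u₀'(L). -/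
/-!
Both edge functions are rescaled, shifted cosines `c * cos (ω * (x - a))`, which solve `-u'' = ω² u`.
The right-hand one is even about the midpoint `L + π` of its edge, so it takes the value
`c * cos (ω * π) = cos (ω * L)` at both ends, and the jump `u₊'(L) - u₊'(L + 2π)` is `2 c ω sin (ω π)`;
the dispersion relation multiplied by `ω cos (ω L)` says exactly that this equals `u₀'(L) = -ω sin (ω L)`.
-/

open Real

theorem hasDerivAt_const_mul_cos_mul_sub (c ω a x : ℝ) :
    HasDerivAt (fun x => c * cos (ω * (x - a))) (-(c * ω * sin (ω * (x - a)))) x :=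
  ((((hasDerivAt_id' x).sub_const a).const_mul ω).cos.const_mul c).congr_deriv (by ring)

theorem hasDerivAt_const_mul_sin_mul_sub (c ω a x : ℝ) :
    HasDerivAt (fun x => c * sin (ω * (x - a))) (c * ω * cos (ω * (x - a))) x :=
  ((((hasDerivAt_id' x).sub_const a).const_mul ω).sin.const_mul c).congr_deriv (by ring)

theorem deriv_const_mul_cos_mul_sub (c ω a : ℝ) :
    deriv (fun x => c * cos (ω * (x - a))) = fun x => -(c * ω * sin (ω * (x - a))) :=
  funext fun x => (hasDerivAt_const_mul_cos_mul_sub c ω a x).deriv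

theorem neg_deriv_deriv_const_mul_cos_mul_sub (c ω a x : ℝ) :
    -deriv (deriv (fun x => c * cos (ω * (x - a)))) x = ω ^ 2 * (c * cos (ω * (x - a))) := by
  rw [deriv_const_mul_cos_mul_sub, deriv.fun_neg,
    (hasDerivAt_const_mul_sin_mul_sub (c * ω) ω a x).deriv]
  ring

theorem two_mul_div_cos_mul_sin_of_two_mul_tan_add_tan {a b : ℝ} (ha : cos a ≠ 0)
    (hb : cos b ≠ 0) (h : 2 * tan a + tan b = 0) :
    2 * (cos b / cos a) * sin a = -sin b := by
  rw [tan_eq_sin_div_cos, tan_eq_sin_div_cos] at h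
  field_simp at h ⊢
  linarith

theorem even_eigenfunction_general (L ω : ℝ)
    (hcosπ : Real.cos (ω * π) ≠ 0) (hcosL : Real.cos (ω * L) ≠ 0)
    (hdisp : 2 * Real.tan (ω * π) + Real.tan (ω * L) = 0) :
    (∀ x : ℝ, -(deriv (deriv (fun x : ℝ => Real.cos (ω * x))) x) =
      ω ^ 2 * Real.cos (ω * x)) ∧
    (∀ x : ℝ, -(deriv (deriv (fun x : ℝ =>
        (Real.cos (ω * L) / Real.cos (ω * π)) * Real.cos (ω * (x - L - π)))) x) =
      ω ^ 2 * ((Real.cos (ω * L) / Real.cos (ω * π)) * Real.cos (ω * (x - L - π)))) ∧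
    (Real.cos (ω * L) / Real.cos (ω * π)) * Real.cos (ω * (L - L - π)) =
      (Real.cos (ω * L) / Real.cos (ω * π)) * Real.cos (ω * ((L + 2 * π) - L - π)) ∧
    (Real.cos (ω * L) / Real.cos (ω * π)) * Real.cos (ω * (L - L - π)) = Real.cos (ω * L) ∧
    deriv (fun x : ℝ => (Real.cos (ω * L) / Real.cos (ω * π)) * Real.cos (ω * (x - L - π))) L -
      deriv (fun x : ℝ => (Real.cos (ω * L) / Real.cos (ω * π)) * Real.cos (ω * (x - L - π)))
        (L + 2 * π) =
      deriv (fun x : ℝ => Real.cos (ω * x)) L := by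
  set c := cos (ω * L) / cos (ω * π)
  have hleft : ω * (L - L - π) = -(ω * π) := by ring
  have hright : ω * (L + 2 * π - L - π) = ω * π := by ring
  refine ⟨fun x => by simpa using neg_deriv_deriv_const_mul_cos_mul_sub 1 ω 0 x,
    fun x => by simpa only [sub_sub] using neg_deriv_deriv_const_mul_cos_mul_sub c ω (L + π) x,
    by rw [hleft, hright, cos_neg], by rw [hleft, cos_neg, div_mul_cancel₀ _ hcosπ], ?_⟩
  have hu₀' : deriv (fun x => cos (ω * x)) L = -(ω * sin (ω * L)) := by
    simpa using (hasDerivAt_const_mul_cos_mul_sub 1 ω 0 L).deriv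
  simp only [sub_sub, deriv_const_mul_cos_mul_sub, hu₀']
  rw [← sub_sub, ← sub_sub, hleft, hright, sin_neg]
  linear_combination ω * two_mul_div_cos_mul_sin_of_two_mul_tan_add_tan hcosπ hcosL hdisp

theorem even_eigenfunction (L ω : ℝ) (hL : 0 < L) (hω : 0 < ω)
    (hcosπ : Real.cos (ω * π) ≠ 0) (hcosL : Real.cos (ω * L) ≠ 0)
    (hdisp : 2 * Real.tan (ω * π) + Real.tan (ω * L) = 0) :
    (∀ x : ℝ, -(deriv (deriv (fun x : ℝ => Real.cos (ω * x))) x) =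
      ω ^ 2 * Real.cos (ω * x)) ∧
    (∀ x : ℝ, -(deriv (deriv (fun x : ℝ =>
        (Real.cos (ω * L) / Real.cos (ω * π)) * Real.cos (ω * (x - L - π)))) x) =
      ω ^ 2 * ((Real.cos (ω * L) / Real.cos (ω * π)) * Real.cos (ω * (x - L - π)))) ∧
    (Real.cos (ω * L) / Real.cos (ω * π)) * Real.cos (ω * (L - L - π)) =
      (Real.cos (ω * L) / Real.cos (ω * π)) * Real.cos (ω * ((L + 2 * π) - L - π)) ∧
    (Real.cos (ω * L) / Real.cos (ω * π)) * Real.cos (ω * (L - L - π)) = Real.cos (ω * L) ∧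
    deriv (fun x : ℝ => (Real.cos (ω * L) / Real.cos (ω * π)) * Real.cos (ω * (x - L - π))) L -
      deriv (fun x : ℝ => (Real.cos (ω * L) / Real.cos (ω * π)) * Real.cos (ω * (x - L - π)))
        (L + 2 * π) =
      deriv (fun x : ℝ => Real.cos (ω * x)) L :=
  even_eigenfunction_general L ω hcosπ hcosL hdisp
end

section
/- Suppose ω > 0 satisfies 2 tan(ωπ) − cot(ωL) = 0 with cos(ωπ) ≠ 0 and sin(ωL) ≠ 0. Then the function defined by u₀(x) = sin(ωx) on [−L,L] and u₊(x) = (sin(ωL)/cos(ωπ))·cos(ω(x−L−π)) on [L, L+2π] satisfies −u'' = ω²u on each edge, u₊(L) = u₊(L+2π) = u₀(L), and u₊'(L) − u₊'(L+2π) = u₀'(L). -/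
/-!
Both pieces are trigonometric, hence solve `-u'' = ω²u`. Continuity at the junctions comes from
the evenness of `cos` about the midpoint `L + π` of the outer edge and the normalisation by
`cos (ωπ)`. The outer edge contributes `2 A ω sin (ωπ)` to the Kirchhoff sum, with
`A = sin (ωL) / cos (ωπ)`; this is `2 ω sin (ωL) tan (ωπ)`, which the dispersion relation turns into
`ω cos (ωL) = u₀'(L)`.
-/

open Real

section Oscillation

variable (ω c : ℝ)

theorem hasDerivAt_sin_mul_sub (x : ℝ) :
    HasDerivAt (fun x => sin (ω * (x - c))) (ω * cos (ω * (x - c))) x := by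
  simpa [mul_comm] using (((hasDerivAt_id x).sub_const c).const_mul ω).sin

theorem hasDerivAt_cos_mul_sub (x : ℝ) :
    HasDerivAt (fun x => cos (ω * (x - c))) (-(ω * sin (ω * (x - c)))) x := by
  simpa [mul_comm] using (((hasDerivAt_id x).sub_const c).const_mul ω).cos

theorem deriv_sin_mul_sub :
    deriv (fun x => sin (ω * (x - c))) = fun x => ω * cos (ω * (x - c)) :=
  funext fun x => (hasDerivAt_sin_mul_sub ω c x).deriv

theorem deriv_cos_mul_sub :
    deriv (fun x => cos (ω * (x - c))) = fun x => -(ω * sin (ω * (x - c))) :=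
  funext fun x => (hasDerivAt_cos_mul_sub ω c x).deriv

theorem deriv_deriv_sin_mul_sub (x : ℝ) :
    deriv (deriv fun x => sin (ω * (x - c))) x = -(ω ^ 2 * sin (ω * (x - c))) := by
  rw [deriv_sin_mul_sub, ((hasDerivAt_cos_mul_sub ω c x).const_mul ω).deriv]
  ring

theorem deriv_deriv_cos_mul_sub (x : ℝ) :
    deriv (deriv fun x => cos (ω * (x - c))) x = -(ω ^ 2 * cos (ω * (x - c))) := by
  rw [deriv_cos_mul_sub]
  exact ((hasDerivAt_sin_mul_sub ω c x).const_mul ω).neg.deriv.trans (by ring)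

end Oscillation

theorem two_sin_mul_tan_eq_cos_of_two_tan_sub_cot_eq_zero {a b : ℝ} (ha : sin a ≠ 0)
    (h : 2 * tan b - 1 / tan a = 0) : 2 * sin a * tan b = cos a := by
  have h' : 2 * tan b = cos a / sin a := by
    rw [sub_eq_zero.mp h, tan_eq_sin_div_cos a, one_div_div]
  rw [mul_right_comm, mul_comm _ (sin a), h', mul_div_cancel₀ _ ha]

theorem odd_eigenfunction_general (L ω : ℝ)
    (hcosπ : Real.cos (ω * π) ≠ 0) (hsinL : Real.sin (ω * L) ≠ 0)
    (hdisp : 2 * Real.tan (ω * π) - 1 / Real.tan (ω * L) = 0) :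
    (∀ x : ℝ, -(deriv (deriv (fun x : ℝ => Real.sin (ω * x))) x) =
      ω ^ 2 * Real.sin (ω * x)) ∧
    (∀ x : ℝ, -(deriv (deriv (fun x : ℝ =>
        (Real.sin (ω * L) / Real.cos (ω * π)) * Real.cos (ω * (x - L - π)))) x) =
      ω ^ 2 * ((Real.sin (ω * L) / Real.cos (ω * π)) * Real.cos (ω * (x - L - π)))) ∧
    (Real.sin (ω * L) / Real.cos (ω * π)) * Real.cos (ω * (L - L - π)) =
      (Real.sin (ω * L) / Real.cos (ω * π)) * Real.cos (ω * ((L + 2 * π) - L - π)) ∧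
    (Real.sin (ω * L) / Real.cos (ω * π)) * Real.cos (ω * (L - L - π)) = Real.sin (ω * L) ∧
    deriv (fun x : ℝ => (Real.sin (ω * L) / Real.cos (ω * π)) * Real.cos (ω * (x - L - π))) L -
      deriv (fun x : ℝ => (Real.sin (ω * L) / Real.cos (ω * π)) * Real.cos (ω * (x - L - π)))
        (L + 2 * π) =
      deriv (fun x : ℝ => Real.sin (ω * x)) L := by
  set A := sin (ω * L) / cos (ω * π)
  have hu₀ : (fun x => sin (ω * x)) = fun x => sin (ω * (x - 0)) := by simp only [sub_zero]
  have hleft : ω * (L - L - π) = -(ω * π) := by ring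
  have hright : ω * (L + 2 * π - L - π) = ω * π := by ring
  refine ⟨fun x => ?_, fun x => ?_, ?_, ?_, ?_⟩
  · rw [hu₀, deriv_deriv_sin_mul_sub, sub_zero, neg_neg]
  · simp only [deriv_const_mul_field', deriv_deriv_cos_mul_sub, sub_sub]
    ring
  · rw [hleft, hright, cos_neg]
  · rw [hleft, cos_neg, div_mul_cancel₀ _ hcosπ]
  · have hkirchhoff := two_sin_mul_tan_eq_cos_of_two_tan_sub_cot_eq_zero hsinL hdisp
    rw [hu₀, deriv_sin_mul_sub]
    simp only [sub_sub, deriv_const_mul_field', deriv_cos_mul_sub, sub_zero,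
      sub_add_cancel_left, show L + 2 * π - (L + π) = π by ring, mul_neg, sin_neg]
    rw [← hkirchhoff, tan_eq_sin_div_cos]
    ring

theorem odd_eigenfunction (L ω : ℝ) (hL : 0 < L) (hω : 0 < ω)
    (hcosπ : Real.cos (ω * π) ≠ 0) (hsinL : Real.sin (ω * L) ≠ 0)
    (hdisp : 2 * Real.tan (ω * π) - 1 / Real.tan (ω * L) = 0) :
    (∀ x : ℝ, -(deriv (deriv (fun x : ℝ => Real.sin (ω * x))) x) =
      ω ^ 2 * Real.sin (ω * x)) ∧
    (∀ x : ℝ, -(deriv (deriv (fun x : ℝ =>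
        (Real.sin (ω * L) / Real.cos (ω * π)) * Real.cos (ω * (x - L - π)))) x) =
      ω ^ 2 * ((Real.sin (ω * L) / Real.cos (ω * π)) * Real.cos (ω * (x - L - π)))) ∧
    (Real.sin (ω * L) / Real.cos (ω * π)) * Real.cos (ω * (L - L - π)) =
      (Real.sin (ω * L) / Real.cos (ω * π)) * Real.cos (ω * ((L + 2 * π) - L - π)) ∧
    (Real.sin (ω * L) / Real.cos (ω * π)) * Real.cos (ω * (L - L - π)) = Real.sin (ω * L) ∧
    deriv (fun x : ℝ => (Real.sin (ω * L) / Real.cos (ω * π)) * Real.cos (ω * (x - L - π))) L -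
      deriv (fun x : ℝ => (Real.sin (ω * L) / Real.cos (ω * π)) * Real.cos (ω * (x - L - π)))
        (L + 2 * π) =
      deriv (fun x : ℝ => Real.sin (ω * x)) L :=
  odd_eigenfunction_general L ω hcosπ hsinL hdisp
end
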